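/- Let λ ≥ 1 and ξ̄, ξ ∈ S^{n-1}. Define ψ_{ξ̄,λ}(x) = min(0, λ|x - ⟨x,ξ̄⟩ξ̄| - ⟨x,ξ̄⟩) for x ∈ S^{n-1}. If ψ_{ξ̄,λ}(ξ) < 0 (equivalently ξ is in the support of ψ_{ξ̄,λ} viewed through the strict inequality), then |ξ̄ - ξ| < √2/√(λ²+1). -/

import Mathlib

/-!
Write `t = ⟪ξ, ξ̄⟫`. For unit vectors the component of `ξ` orthogonal to `ξ̄` has squared length
`1 - t²`, so `ψ(ξ) < 0` says `λ √(1 - t²) < t`. Then `t > 0` and `λ² (1 - t²) < t²`; dividing by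
`1 + t` gives `λ² (1 - t) < t`, i.e. `‖ξ̄ - ξ‖² = 2 - 2t < 2 / (λ² + 1)`.
-/

open Metric MeasureTheory RealInnerProductSpace

section UnitVectors

variable {E : Type*} [NormedAddCommGroup E] [InnerProductSpace ℝ E]

theorem norm_sub_inner_smul_sq_of_norm_eq_one {u : E} (hu : ‖u‖ = 1) (x : E) :
    ‖x - ⟪x, u⟫ • u‖ ^ 2 = ‖x‖ ^ 2 - ⟪x, u⟫ ^ 2 := by
  rw [norm_sub_sq_real, real_inner_smul_right, norm_smul, hu, mul_one, Real.norm_eq_abs, sq_abs]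
  ring

theorem norm_sub_sq_eq_two_sub_two_inner {u x : E} (hu : ‖u‖ = 1) (hx : ‖x‖ = 1) :
    ‖u - x‖ ^ 2 = 2 - 2 * ⟪x, u⟫ := by
  rw [norm_sub_sq_real, real_inner_comm, hu, hx]
  ring

end UnitVectors

theorem two_sub_two_mul_lt_of_mul_sqrt_lt {l t : ℝ} (hl : 0 ≤ l) (ht : l * √(1 - t ^ 2) < t) :
    2 - 2 * t < 2 / (l ^ 2 + 1) := by
  have ht_pos : 0 < t := (mul_nonneg hl (Real.sqrt_nonneg _)).trans_lt ht
  have hsq : l ^ 2 * (1 - t ^ 2) < t ^ 2 := by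
    by_cases h : 1 - t ^ 2 ≤ 0
    · nlinarith
    · calc l ^ 2 * (1 - t ^ 2) = (l * √(1 - t ^ 2)) ^ 2 := by
            rw [mul_pow, Real.sq_sqrt (by linarith)]
        _ < t ^ 2 := pow_lt_pow_left₀ ht (by positivity) two_ne_zero
  have hlin : l ^ 2 * (1 - t) < t := by
    have hfactor : (l ^ 2 * (1 - t) - t) * (1 + t) < 0 := by nlinarith
    linarith [neg_of_mul_neg_left hfactor (by linarith)]
  rw [lt_div_iff₀ (by positivity)]
  nlinarith

theorem stmt_9_general (n : ℕ) (l : ℝ) (hl : 1 ≤ l)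
    (ξbar ξ : EuclideanSpace ℝ (Fin n))
    (hξbar : ξbar ∈ sphere (0 : EuclideanSpace ℝ (Fin n)) 1)
    (hξ : ξ ∈ sphere (0 : EuclideanSpace ℝ (Fin n)) 1)
    (hsupp : min 0 (l * ‖ξ - ⟪ξ, ξbar⟫ • ξbar‖ - ⟪ξ, ξbar⟫) < 0) :
    ‖ξbar - ξ‖ < Real.sqrt 2 / Real.sqrt (l ^ 2 + 1) := by
  rw [mem_sphere_zero_iff_norm] at hξbar hξ
  have hφ : l * √(1 - ⟪ξ, ξbar⟫ ^ 2) < ⟪ξ, ξbar⟫ := by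
    have hperp := norm_sub_inner_smul_sq_of_norm_eq_one hξbar ξ
    rw [hξ, one_pow] at hperp
    rw [← hperp, Real.sqrt_sq (norm_nonneg _)]
    linarith [min_lt_iff.mp hsupp |>.resolve_left (lt_irrefl 0)]
  have hdist := two_sub_two_mul_lt_of_mul_sqrt_lt (by linarith) hφ
  rw [← norm_sub_sq_eq_two_sub_two_inner hξbar hξ] at hdist
  rw [← Real.sqrt_div' _ (by positivity)]
  exact Real.lt_sqrt (norm_nonneg _) |>.mpr hdist

/-- with `ψ_{ξ̄,λ}(x) = min(0, λ‖x - ⟪x,ξ̄⟫ξ̄‖ - ⟪x,ξ̄⟫)`, if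
`ψ_{ξ̄,λ}(ξ) < 0` then `‖ξ̄ - ξ‖ < √2/√(λ²+1)`. -/
theorem stmt_9 (n : ℕ) (hn : 2 ≤ n) (l : ℝ) (hl : 1 ≤ l)
    (ξbar ξ : EuclideanSpace ℝ (Fin n))
    (hξbar : ξbar ∈ sphere (0 : EuclideanSpace ℝ (Fin n)) 1)
    (hξ : ξ ∈ sphere (0 : EuclideanSpace ℝ (Fin n)) 1)
    (hsupp : min 0 (l * ‖ξ - ⟪ξ, ξbar⟫ • ξbar‖ - ⟪ξ, ξbar⟫) < 0) :
    ‖ξbar - ξ‖ < Real.sqrt 2 / Real.sqrt (l ^ 2 + 1) :=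
  stmt_9_general n l hl ξbar ξ hξbar hξ hsupp
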